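/- For all k ≥ 1: if 0 ≤ j ≤ 2k then L_{k+1}^{j+1}(1) - L_k^j(1) = 1; if 2k ≤ j ≤ 3k then L_{k+1}^{j+1}(1) - L_k^j(1) = -(j-2k-1)(j-2k+2)/2. In particular L_{k+1}^{2k+2}(1) = L_k^{2k+1}(1). Moreover, for all j ≥ 2k+2, L_{k+1}^{j+1}(1) < L_k^j(1). -/

import Mathlib

/-- The substitution τ_k, applied to a single letter: τ_k(k) = k1 and τ_k(i) = i+1 for i ≠ k. -/
def tauLetter (k i : ℕ) : List ℕ := if i = k then [k, 1] else [i + 1]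

/-- The substitution τ_k, extended to finite words (lists of letters) by concatenation. -/
def tauWord (k : ℕ) (w : List ℕ) : List ℕ := w.flatMap (tauLetter k)

/-- The infinite fixed point x_k of τ_k (starting with the letter k): its n-th letter is the
n-th letter of any sufficiently long iterate τ_k^j(k), here j = n+1. -/
def xk (k n : ℕ) : ℕ := ((tauWord k)^[n + 1] [k]).getD n 0

/-- L_k(n) = |τ_k(x_k[0:n))|, the length of the τ_k-image of the prefix of x_k of length n. -/
def Lk (k n : ℕ) : ℕ := (tauWord k ((List.range n).map (xk k))).length

/-- C_k^{(=i)}(n): the number of occurrences of the letter i among x_k[0],...,x_k[n-1]. -/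
def Ceq (k i n : ℕ) : ℕ := ((Finset.range n).filter (fun m => xk k m = i)).card

/-- C_k^{(>j)}(n): the number of positions m < n with x_k[m] > j. -/
def Cgt (k j n : ℕ) : ℕ := ((Finset.range n).filter (fun m => j < xk k m)).card

/-!
Write `f_k(j) = |τ_k^j(k)|` (`iterLength k j`). Since `τ_k(k) = k1` we have `τ_k^{j+1}(k) = τ_k^j(k) τ_k^j(1)`, and
`τ_k^{k-1}(1) = k`; hence `f_k(j) = j + 1` for `j ≤ k` and `f_k(j) = f_k(j-1) + f_k(j-k)` for
`j ≥ k`. Every `τ_k^j(k)` is a prefix of `x_k`, so `L_k` sends `f_k(j)` to `f_k(j+1)` and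
`L_k^j(1) = f_k(j)`.

The recurrences show that the defect `d(j) = f_{k+1}(j+1) - f_k(j)` changes by `f_{k+1}(m) - f_k(m)`, with
`m = j + 1 - k`, when `j` passes to `j + 1` (for `j ≥ k`). This increment is `0` for `m ≤ k`,
it is `-(m - k)` for `k < m ≤ 2k`, and it is negative for every `m > k`, because `f_{k+1} < f_k`
beyond `k`. Starting from `d(j) = 1` for `j ≤ k` this gives the three regimes.
-/

open Function

lemma tauWord_append (k : ℕ) (u v : List ℕ) :
    tauWord k (u ++ v) = tauWord k u ++ tauWord k v :=
  List.flatMap_append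

lemma tauWord_iterate_append (k j : ℕ) (u v : List ℕ) :
    (tauWord k)^[j] (u ++ v) = (tauWord k)^[j] u ++ (tauWord k)^[j] v := by
  induction j generalizing u v with
  | zero => rfl
  | succ j ih => simp only [iterate_succ_apply, tauWord_append, ih]

lemma tauWord_iterate_singleton {k i m : ℕ} (h : i + m ≤ k) :
    (tauWord k)^[m] [i] = [i + m] := by
  induction m generalizing i with
  | zero => rfl
  | succ m ih =>
    have hstep : tauWord k [i] = [i + 1] := by simp [tauWord, tauLetter, show i ≠ k by omega]
    rw [iterate_succ_apply, hstep, ih (by omega), add_right_comm, add_assoc]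

lemma tauWord_iterate_succ_self (k j : ℕ) :
    (tauWord k)^[j + 1] [k] = (tauWord k)^[j] [k] ++ (tauWord k)^[j] [1] := by
  rw [iterate_succ_apply, show tauWord k [k] = [k] ++ [1] by simp [tauWord, tauLetter],
    tauWord_iterate_append]

lemma tauWord_iterate_one {k : ℕ} (hk : 1 ≤ k) (j : ℕ) :
    (tauWord k)^[j + (k - 1)] [1] = (tauWord k)^[j] [k] := by
  rw [iterate_add_apply, tauWord_iterate_singleton (by omega), Nat.add_sub_cancel' hk]

lemma tauWord_ne_nil (k : ℕ) {w : List ℕ} (hw : w ≠ []) : tauWord k w ≠ [] := by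
  obtain ⟨a, w, rfl⟩ := List.exists_cons_of_ne_nil hw
  rw [tauWord, List.flatMap_cons, tauLetter]
  split_ifs <;> simp

lemma tauWord_iterate_ne_nil (k j : ℕ) {w : List ℕ} (hw : w ≠ []) : (tauWord k)^[j] w ≠ [] := by
  induction j with
  | zero => exact hw
  | succ j ih => rw [iterate_succ_apply']; exact tauWord_ne_nil k ih

lemma tauWord_iterate_prefix (k : ℕ) {m n : ℕ} (h : m ≤ n) :
    (tauWord k)^[m] [k] <+: (tauWord k)^[n] [k] := by
  induction n, h using Nat.le_induction with
  | base => exact List.prefix_refl _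
  | succ n _ ih => exact ih.trans (tauWord_iterate_succ_self k n ▸ List.prefix_append _ _)

def iterLength (k j : ℕ) : ℕ := ((tauWord k)^[j] [k]).length

lemma iterLength_strictMono (k : ℕ) : StrictMono (iterLength k) :=
  strictMono_nat_of_lt_succ fun j => by
    simp [iterLength, tauWord_iterate_succ_self,
      List.length_pos_iff.2 (tauWord_iterate_ne_nil k j (List.cons_ne_nil 1 []))]

lemma xk_eq_getElem {k j n : ℕ} (hn : n < iterLength k j) :
    xk k n = ((tauWord k)^[j] [k])[n] := by
  have hn' : n < iterLength k (n + 1) := (iterLength_strictMono k).id_le (n + 1)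
  rw [xk, List.getD_eq_getElem _ _ hn']
  rcases le_total (n + 1) j with h | h
  · exact (tauWord_iterate_prefix k h).getElem hn'
  · exact ((tauWord_iterate_prefix k h).getElem hn).symm

lemma map_xk_range_iterLength (k j : ℕ) :
    (List.range (iterLength k j)).map (xk k) = (tauWord k)^[j] [k] :=
  List.ext_getElem (by simp [iterLength]) fun n _ h => by
    simp only [List.getElem_map, List.getElem_range]
    exact xk_eq_getElem h

lemma Lk_iterate_one (k j : ℕ) : (Lk k)^[j] 1 = iterLength k j := by
  induction j with
  | zero => rfl
  | succ j ih =>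
    rw [iterate_succ_apply', ih, Lk, map_xk_range_iterLength, iterLength, iterate_succ_apply']

lemma iterLength_of_le {k j : ℕ} (h : j ≤ k) : iterLength k j = j + 1 := by
  induction j with
  | zero => rfl
  | succ j ih =>
    rw [iterLength, tauWord_iterate_succ_self, List.length_append, ← iterLength, ih (by omega),
      tauWord_iterate_singleton (by omega : 1 + j ≤ k), List.length_singleton]

-- The indices are tied to `j` by equations so that callers can discharge them with `omega`.
lemma iterLength_eq_add {k a b j : ℕ} (hk : 1 ≤ k) (ha : a + 1 = j) (hb : b + k = j) :
    iterLength k j = iterLength k a + iterLength k b := by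
  subst ha
  obtain rfl : a = b + (k - 1) := by omega
  rw [iterLength, tauWord_iterate_succ_self, List.length_append, tauWord_iterate_one hk]
  rfl

lemma iterLength_succ_le {k : ℕ} (hk : 1 ≤ k) (m : ℕ) : iterLength (k + 1) m ≤ iterLength k m := by
  induction m using Nat.strong_induction_on with
  | _ m ih =>
    rcases le_or_gt m k with h | h
    · rw [iterLength_of_le h, iterLength_of_le (by omega)]
    · rw [iterLength_eq_add (a := m - 1) (b := m - 1 - k) (by omega) (by omega) (by omega),
        iterLength_eq_add (a := m - 1) (b := m - k) hk (by omega) (by omega)]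
      exact add_le_add (ih _ (by omega))
        ((ih _ (by omega)).trans ((iterLength_strictMono k).monotone (by omega)))

lemma iterLength_succ_lt {k m : ℕ} (hk : 1 ≤ k) (hm : k + 1 ≤ m) :
    iterLength (k + 1) m < iterLength k m := by
  induction m, hm using Nat.le_induction with
  | base =>
    rw [iterLength_of_le le_rfl, iterLength_eq_add (a := k) (b := 1) hk rfl (by omega),
      iterLength_of_le le_rfl, iterLength_of_le hk]
    omega
  | succ m hm ih =>
    rw [iterLength_eq_add (a := m) (b := m - k) (by omega) rfl (by omega),
      iterLength_eq_add (a := m) (b := m + 1 - k) hk rfl (by omega)]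
    exact add_lt_add_of_lt_of_le ih
      ((iterLength_succ_le hk _).trans ((iterLength_strictMono k).monotone (by omega)))

def defect (k j : ℕ) : ℚ := iterLength (k + 1) (j + 1) - iterLength k j

section defect

variable {k : ℕ}

lemma defect_succ (hk : 1 ≤ k) {j : ℕ} (hj : k ≤ j) :
    defect k (j + 1) =
      defect k j + ((iterLength (k + 1) (j + 1 - k) : ℚ) - iterLength k (j + 1 - k)) := by
  rw [defect, defect, iterLength_eq_add (a := j + 1) (b := j + 1 - k) (by omega) rfl (by omega),
    iterLength_eq_add (a := j) (b := j + 1 - k) hk rfl (by omega)]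
  push_cast
  ring

lemma defect_of_le (hk : 1 ≤ k) {j : ℕ} (hj : j ≤ 2 * k) : defect k j = 1 := by
  induction j with
  | zero => norm_num [defect, iterLength_of_le]
  | succ j ih =>
    rcases le_or_gt (j + 1) k with h | h
    · rw [defect, iterLength_of_le h, iterLength_of_le (by omega : j + 1 + 1 ≤ k + 1)]
      push_cast
      ring
    · rw [defect_succ hk (by omega), ih (by omega), iterLength_of_le (by omega : j + 1 - k ≤ k),
        iterLength_of_le (by omega : j + 1 - k ≤ k + 1)]
      ring

lemma defect_two_mul_add (hk : 1 ≤ k) {t : ℕ} (ht : t ≤ k) :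
    defect k (2 * k + t) = 1 - t * (t + 1) / 2 := by
  induction t with
  | zero => simpa using defect_of_le hk le_rfl
  | succ t ih =>
    have hmid : defect k (k + t) = 1 := defect_of_le hk (by omega)
    have hf : iterLength k (k + t + 1) = iterLength k (k + t) + (t + 2) := by
      rw [iterLength_eq_add (a := k + t) (b := t + 1) hk rfl (by omega),
        iterLength_of_le (by omega : t + 1 ≤ k)]
    rw [← add_assoc, defect_succ hk (by omega), ih (by omega),
      show 2 * k + t + 1 - k = k + t + 1 by omega, hf]
    rw [defect] at hmid
    push_cast
    linear_combination hmid

lemma defect_succ_lt (hk : 1 ≤ k) {j : ℕ} (hj : 2 * k ≤ j) : defect k (j + 1) < defect k j := by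
  have hlt : (iterLength (k + 1) (j + 1 - k) : ℚ) < iterLength k (j + 1 - k) := by
    exact_mod_cast iterLength_succ_lt hk (by omega)
  rw [defect_succ hk (by omega)]
  linarith

lemma defect_neg (hk : 1 ≤ k) {j : ℕ} (hj : 2 * k + 2 ≤ j) : defect k j < 0 := by
  induction j, hj using Nat.le_induction with
  | base =>
    have hzero : defect k (2 * k + 1) = 0 := by rw [defect_two_mul_add hk hk]; norm_num
    exact hzero ▸ defect_succ_lt hk (by omega)
  | succ j hj ih => exact (defect_succ_lt hk (by omega)).trans ih

end defect

/-- Values of L_{k+1}^{j+1}(1) - L_k^j(1): equal to 1 for 0 ≤ j ≤ 2k, equal to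
-(j-2k-1)(j-2k+2)/2 for 2k ≤ j ≤ 3k; in particular L_{k+1}^{2k+2}(1) = L_k^{2k+1}(1);
moreover L_{k+1}^{j+1}(1) < L_k^j(1) for all j ≥ 2k+2. -/
theorem stmt18 (k : ℕ) (hk : 1 ≤ k) :
    (∀ j, j ≤ 2 * k → ((Lk (k + 1))^[j + 1] 1 : ℚ) - ((Lk k)^[j] 1 : ℚ) = 1) ∧
    (∀ j, 2 * k ≤ j → j ≤ 3 * k →
      ((Lk (k + 1))^[j + 1] 1 : ℚ) - ((Lk k)^[j] 1 : ℚ) =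
        -(((j : ℚ) - 2 * k - 1) * ((j : ℚ) - 2 * k + 2)) / 2) ∧
    (Lk (k + 1))^[2 * k + 2] 1 = (Lk k)^[2 * k + 1] 1 ∧
    (∀ j, 2 * k + 2 ≤ j → (Lk (k + 1))^[j + 1] 1 < (Lk k)^[j] 1) := by
  have hL (j : ℕ) : ((Lk (k + 1))^[j + 1] 1 : ℚ) - ((Lk k)^[j] 1 : ℚ) = defect k j := by
    rw [Lk_iterate_one, Lk_iterate_one, defect]
  refine ⟨fun j hj => (hL j).trans (defect_of_le hk hj), fun j h₁ h₂ => ?_, ?_, fun j hj => ?_⟩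
  · obtain ⟨t, ht, rfl⟩ : ∃ t, t ≤ k ∧ j = 2 * k + t := ⟨j - 2 * k, by omega, by omega⟩
    rw [hL, defect_two_mul_add hk ht]
    push_cast
    ring
  · have h := (hL (2 * k + 1)).trans (defect_two_mul_add hk hk)
    norm_num [sub_eq_zero] at h
    exact_mod_cast h
  · have h := (hL j).trans_lt (defect_neg hk hj)
    rw [sub_neg] at h
    exact_mod_cast h
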